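/- arXiv:2312.13525 — 2 statements merged into one kernel-verified Lean document; each statement's English description precedes it below -/
import Mathlib

section
/- For every z ∈ M and positive integer k, the two formal sine functions coincide: S^T_{z,k}(x) = S^R_{z,k}(x) in the power series ring 𝔥_{M,∗}⟦x⟧. Equivalently, Σ_{n≥0} s_{z^n,k} s_{z^{n−1},k} ⋯ s_{z,k} x^{nk} = exp_∗( Σ_{n≥1} (s_{z^n,nk}/n) x^{nk} ). -/
/-!
Put `A(x) = Σ_n s_{z^n,k} ⋯ s_{z,k} x^{nk}` and `G(x) = Σ_{n ≥ 1} (s_{z^n,nk} / n) x^{nk}`.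
Both `A` and `exp_∗ G` have constant term `1` and solve the Euler equation `θF = θG ∗ F`,
`θ = x d/dx`, which determines `F` coefficient by coefficient. For `exp_∗ G` this needs the
associativity of `∗` and that the coefficients of `G` commute, as their letters `z^n` and `0` do.
For `A`, undoing the substitution `x ↦ x^k` turns the equation into the Newton-type identity
`n s_{z^n,k} ⋯ s_{z,k} = Σ_{m=1}^n s_{z^m,mk} ∗ (s_{z^{n-m},k} ⋯ s_{z,k})`, which telescopes
after one application of the recursion defining `∗`.
-/

open scoped BigOperators

/-- `𝔥_M`: the noncommutative polynomial ring `ℚ⟨e_z : z ∈ M⟩`, realized as the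
monoid algebra of the free monoid on `M` over `ℚ` (concatenation product). -/
abbrev H (M : Type*) [MonoidWithZero M] : Type _ := MonoidAlgebra ℚ (FreeMonoid M)

variable {M : Type*} [MonoidWithZero M]

/-- The word `e_{a_1} ⋯ e_{a_k}` as an element of `𝔥_M`. -/
noncomputable def wrd (l : List M) : H M := MonoidAlgebra.single (FreeMonoid.ofList l) 1

/-- The generator `e_z`. -/
noncomputable def e (z : M) : H M := wrd [z]

/-- The harmonic product on words, defined by the recursion
`e_a w ∗ e_b w' = e_{ab}(w ∗ e_b w' + e_a w ∗ w' − e_0 (w ∗ w'))`. -/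
noncomputable def har : List M → List M → H M
  | [], w => wrd w
  | a :: w, [] => wrd (a :: w)
  | a :: w, b :: w' =>
      wrd [a * b] * (har w (b :: w') + har (a :: w) w' - wrd [0] * har w w')
termination_by w w' => w.length + w'.length
decreasing_by all_goals (simp; try omega)

/-- The harmonic product `∗` on `𝔥_M`, extended ℚ-bilinearly from words. -/
noncomputable def hmul (f g : H M) : H M :=
  Finsupp.sum f.coeff fun w a => Finsupp.sum g.coeff fun w' b =>
    (a * b) • har (FreeMonoid.toList w) (FreeMonoid.toList w')

/-- Powers with respect to the harmonic product. -/
noncomputable def hpow (a : H M) : ℕ → H M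
  | 0 => 1
  | n + 1 => hmul a (hpow a n)

/-- `s_{z,k} = e_z e_0^{k-1}` (concatenation product). -/
noncomputable def s (z : M) (k : ℕ) : H M := e z * (e 0) ^ (k - 1)

/-- `sprod z k n = s_{z^n,k} s_{z^{n-1},k} ⋯ s_{z,k}` (concatenation), `sprod z k 0 = 1`. -/
noncomputable def sprod (z : M) (k : ℕ) : ℕ → H M
  | 0 => 1
  | n + 1 => s (z ^ (n + 1)) k * sprod z k n

/-- Cauchy product of power series over `(𝔥_M, ∗)`, represented as coefficient sequences. -/
noncomputable def hmulPS (f g : ℕ → H M) : ℕ → H M :=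
  fun n => ∑ i ∈ Finset.range (n + 1), hmul (f i) (g (n - i))

/-- Powers of a power series w.r.t. the harmonic product. -/
noncomputable def psPow (f : ℕ → H M) : ℕ → (ℕ → H M)
  | 0 => fun n => if n = 0 then 1 else 0
  | m + 1 => hmulPS f (psPow f m)

/-- `exp_∗` of a power series with zero constant term (coefficientwise). -/
noncomputable def expPS (f : ℕ → H M) : ℕ → H M :=
  fun n => ∑ m ∈ Finset.range (n + 1), ((Nat.factorial m : ℚ))⁻¹ • psPow f m n

/-- Coefficients of the formal sine `S_z(x) = Σ_{n≥0} s_{z^n,2}⋯s_{z,2} x^{2n+1}`. -/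
noncomputable def Scoef (z : M) (d : ℕ) : H M :=
  if d % 2 = 1 then sprod z 2 (d / 2) else 0

/-- Coefficients of the formal cosine `C_z(x) = S_z'(x)`. -/
noncomputable def Ccoef (z : M) (d : ℕ) : H M := ((d : ℚ) + 1) • Scoef z (d + 1)

/-- `w_{z,n} = (2n+1)! s_{z^n,2} ⋯ s_{z,2}`. -/
noncomputable def wz (z : M) (n : ℕ) : H M := ((Nat.factorial (2 * n + 1) : ℚ)) • sprod z 2 n

/-- `g_{z,m,n} = w_{z,m+n} − w_{z,m} ∗ w_{z,n}`. -/
noncomputable def gz (z : M) (m n : ℕ) : H M := wz z (m + n) - hmul (wz z m) (wz z n)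

/-- Coefficient of `x^i y^j` in `A_z(x,y) = S_z(x+y) − S_z(x) ∗ C_z(y) − C_z(x) ∗ S_z(y)`. -/
noncomputable def Acoef (z : M) (i j : ℕ) : H M :=
  (Nat.choose (i + j) i : ℚ) • Scoef z (i + j)
    - hmul (Scoef z i) (Ccoef z j) - hmul (Ccoef z i) (Scoef z j)

/-- Coefficient of `x^d` in `P_z(x) = −w_{z,1} ∗ S_z(x)^{∗2} + C_z(x)^{∗2}`. -/
noncomputable def Pcoef (z : M) (d : ℕ) : H M :=
  -(hmul (wz z 1) (hmulPS (Scoef z) (Scoef z) d)) + hmulPS (Ccoef z) (Ccoef z) d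


/-- Coefficients of `S^T_{z,k}(x) = Σ_{n≥0} s_{z^n,k}⋯s_{z,k} x^{(n+1)k−1}`. -/
noncomputable def STcoef (z : M) (k : ℕ) (d : ℕ) : H M :=
  if k ∣ (d + 1) then sprod z k ((d + 1) / k - 1) else 0

/-- Coefficients of the series `Σ_{n≥1} (s_{z^n,nk}/n) x^{nk}`. -/
noncomputable def gexp (z : M) (k : ℕ) (d : ℕ) : H M :=
  if d ≠ 0 ∧ k ∣ d then (((d / k : ℕ) : ℚ))⁻¹ • s (z ^ (d / k)) d else 0

/-- Coefficients of `S^R_{z,k}(x) = x^{k−1} exp_∗(Σ_{n≥1} (s_{z^n,nk}/n) x^{nk})`. -/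
noncomputable def SRcoef (z : M) (k : ℕ) (d : ℕ) : H M :=
  if k - 1 ≤ d then expPS (gexp z k) (d - (k - 1)) else 0

/-- Admissible words spanning `𝔥^0_M = ℚ ⊕ ⨁_{a≠0,1} 𝔥_M e_a ⊕ ⨁_{a≠0,b≠1} e_a 𝔥_M e_b`. -/
def adm0 (l : List M) : Prop :=
  l = [] ∨ ∃ h : l ≠ [],
    (l.getLast h ≠ 0 ∧ l.getLast h ≠ 1) ∨ (l.head h ≠ 0 ∧ l.getLast h ≠ 1)

/-- The subspace `𝔥^0_M`. -/
noncomputable def H0 (M : Type*) [MonoidWithZero M] : Submodule ℚ (H M) :=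
  Submodule.span ℚ {x | ∃ l : List M, adm0 l ∧ x = wrd l}

/-- Words spanning `𝔥^1_M = ⨁_{m≥0} 𝔥^0_M e_1^m`. -/
def adm1 (l : List M) : Prop :=
  ∃ (l₀ : List M) (m : ℕ), adm0 l₀ ∧ l = l₀ ++ List.replicate m 1

/-- The subspace `𝔥^1_M`. -/
noncomputable def H1 (M : Type*) [MonoidWithZero M] : Submodule ℚ (H M) :=
  Submodule.span ℚ {x | ∃ l : List M, adm1 l ∧ x = wrd l}

/-- `ℓ(w)`: the number of letters `e_a` of a word with `a ≠ 0`. -/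
noncomputable def lcount (l : List M) : ℕ :=
  l.countP fun a => @decide (a ≠ 0) (Classical.propDecidable _)

/-- `ℱ_d 𝔥^0_M`: span of admissible words `w` with `ℓ(w) ≤ d`. -/
noncomputable def F0 (M : Type*) [MonoidWithZero M] (d : ℕ) : Submodule ℚ (H M) :=
  Submodule.span ℚ {x | ∃ l : List M, adm0 l ∧ lcount l ≤ d ∧ x = wrd l}

/-- The ideal of `(𝔥_M, ∗)` generated by a set. -/
noncomputable def genIdeal (S : Set (H M)) : Submodule ℚ (H M) :=
  Submodule.span ℚ {x | ∃ a y, y ∈ S ∧ x = hmul a y}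

/-- The product on the polynomial ring `𝔥_{M,∗}[S,T]` (represented as
finitely supported coefficient families indexed by monomials `S^i T^j`). -/
noncomputable def polyMul2 (f g : (ℕ × ℕ) →₀ H M) : (ℕ × ℕ) →₀ H M :=
  Finsupp.sum f fun p a => Finsupp.sum g fun q b => Finsupp.single (p + q) (hmul a b)

/-- `φ : 𝔥^0_{M,∗}[S,T] → 𝔥_{M,∗}`, `Σ w_{ij} S^i T^j ↦ Σ w_{ij} ∗ e_0^{∗i} ∗ e_1^{∗j}`. -/
noncomputable def phi2 (f : (ℕ × ℕ) →₀ H M) : H M :=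
  Finsupp.sum f fun p a => hmul a (hmul (hpow (e 0) p.1) (hpow (e 1) p.2))

/-- The product on `𝔥_{M,∗}[S]`. -/
noncomputable def polyMul1 (f g : ℕ →₀ H M) : ℕ →₀ H M :=
  Finsupp.sum f fun p a => Finsupp.sum g fun q b => Finsupp.single (p + q) (hmul a b)

/-- `φ₁ : 𝔥^1_{M,∗}[S] → 𝔥_{M,∗}`, `Σ w_i S^i ↦ Σ w_i ∗ e_0^{∗i}`. -/
noncomputable def phi1 (f : ℕ →₀ H M) : H M :=
  Finsupp.sum f fun i a => hmul a (hpow (e 0) i)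


open Finset

lemma wrd_nil : wrd ([] : List M) = 1 := rfl

lemma wrd_append (u v : List M) : wrd (u ++ v) = wrd u * wrd v := by
  simp [wrd, MonoidAlgebra.single_mul_single]

lemma wrd_cons (a : M) (u : List M) : wrd (a :: u) = e a * wrd u :=
  wrd_append [a] u

lemma e_zero_pow (n : ℕ) : e (0 : M) ^ n = wrd (List.replicate n 0) := by
  induction n with
  | zero => rfl
  | succ n ih => rw [pow_succ', ih, List.replicate_succ, wrd_cons]

lemma s_eq_wrd (x : M) (p : ℕ) : s x p = wrd (x :: List.replicate (p - 1) 0) := by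
  rw [s, e_zero_pow, wrd_cons]

lemma har_nil_left (v : List M) : har [] v = wrd v := by
  rw [har]

lemma har_nil_right (u : List M) : har u [] = wrd u := by
  cases u <;> rw [har]

lemma har_cons_cons (a b : M) (u v : List M) :
    har (a :: u) (b :: v) = e (a * b) * (har u (b :: v) + har (a :: u) v - e 0 * har u v) := by
  rw [har]; rfl

lemma har_zero_cons_left (u v : List M) : har (0 :: u) v = e 0 * har u v := by
  induction v with
  | nil => rw [har_nil_right, har_nil_right, wrd_cons]
  | cons b v ih => rw [har_cons_cons, zero_mul, ih, add_sub_cancel_right]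

lemma har_zero_cons_right (u v : List M) : har u (0 :: v) = e 0 * har u v := by
  induction u with
  | nil => rw [har_nil_left, har_nil_left, wrd_cons]
  | cons a u ih => rw [har_cons_cons, mul_zero, ih, add_sub_cancel_left]

lemma har_comm : ∀ u v : List M, (∀ x ∈ u, ∀ y ∈ v, Commute x y) → har u v = har v u
  | [], v, _ => by rw [har_nil_left, har_nil_right]
  | a :: u, [], _ => by rw [har_nil_left, har_nil_right]
  | a :: u, b :: v, h => by
    have hu : ∀ x ∈ u, ∀ y ∈ b :: v, Commute x y := fun x hx =>
      h x (List.mem_cons_of_mem _ hx)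
    have hv : ∀ x ∈ a :: u, ∀ y ∈ v, Commute x y := fun x hx y hy =>
      h x hx y (List.mem_cons_of_mem _ hy)
    have huv : ∀ x ∈ u, ∀ y ∈ v, Commute x y := fun x hx y hy =>
      hu x hx y (List.mem_cons_of_mem _ hy)
    rw [har_cons_cons, har_cons_cons, (h a List.mem_cons_self b List.mem_cons_self).eq,
      har_comm u _ hu, har_comm _ v hv, har_comm u v huv]
    abel_nf
termination_by u v => u.length + v.length

@[elab_as_elim]
lemma H.induction_on {p : H M → Prop} (x : H M) (zero : p 0)
    (add : ∀ x y, p x → p y → p (x + y)) (smul : ∀ (c : ℚ) x, p x → p (c • x))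
    (word : ∀ l, p (wrd l)) : p x := by
  induction x using MonoidAlgebra.induction_linear with
  | zero => exact zero
  | add x y hx hy => exact add x y hx hy
  | single w c => simpa [wrd, MonoidAlgebra.smul_single'] using smul c _ (word w.toList)

lemma hmul_wrd_wrd (u v : List M) : hmul (wrd u) (wrd v) = har u v := by
  simp [hmul, wrd, MonoidAlgebra.coeff_single]

lemma hmul_add_left (x y z : H M) : hmul (x + y) z = hmul x z + hmul y z := by
  unfold hmul
  rw [MonoidAlgebra.coeff_add, Finsupp.sum_add_index']
  · intro w; simp
  · intro w a b; rw [← Finsupp.sum_add]; congr 1; ext w' c; rw [add_mul, add_smul]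

lemma hmul_add_right (x y z : H M) : hmul x (y + z) = hmul x y + hmul x z := by
  unfold hmul
  rw [MonoidAlgebra.coeff_add, ← Finsupp.sum_add]
  congr 1; ext w a
  rw [Finsupp.sum_add_index']
  · intro w'; simp
  · intro w' b c; rw [mul_add, add_smul]

lemma hmul_smul_left (c : ℚ) (x y : H M) : hmul (c • x) y = c • hmul x y := by
  unfold hmul
  rw [MonoidAlgebra.coeff_smul, Finsupp.sum_smul_index (by simp), Finsupp.smul_sum]
  refine Finsupp.sum_congr fun w _ => ?_
  rw [Finsupp.smul_sum]
  exact Finsupp.sum_congr fun w' _ => by rw [smul_smul, mul_assoc]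

lemma hmul_smul_right (c : ℚ) (x y : H M) : hmul x (c • y) = c • hmul x y := by
  unfold hmul
  rw [MonoidAlgebra.coeff_smul, Finsupp.smul_sum]
  refine Finsupp.sum_congr fun w _ => ?_
  rw [Finsupp.sum_smul_index (by simp), Finsupp.smul_sum]
  exact Finsupp.sum_congr fun w' _ => by rw [smul_smul, mul_left_comm]

noncomputable def hmulₗ : H M →ₗ[ℚ] H M →ₗ[ℚ] H M :=
  LinearMap.mk₂ ℚ hmul hmul_add_left hmul_smul_left hmul_add_right hmul_smul_right

lemma hmul_zero_left (x : H M) : hmul 0 x = 0 := hmulₗ.map_zero₂ x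

lemma hmul_zero_right (x : H M) : hmul x 0 = 0 := (hmulₗ x).map_zero

lemma hmul_sub_left (x y z : H M) : hmul (x - y) z = hmul x z - hmul y z :=
  hmulₗ.map_sub₂ x y z

lemma hmul_sub_right (x y z : H M) : hmul x (y - z) = hmul x y - hmul x z :=
  (hmulₗ x).map_sub y z

lemma hmul_sum_right {ι : Type*} (x : H M) (t : Finset ι) (f : ι → H M) :
    hmul x (∑ i ∈ t, f i) = ∑ i ∈ t, hmul x (f i) :=
  map_sum (hmulₗ x) f t

lemma hmul_one_left (x : H M) : hmul 1 x = x := by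
  induction x using H.induction_on with
  | zero => exact hmul_zero_right 1
  | add x y hx hy => rw [hmul_add_right, hx, hy]
  | smul c x hx => rw [hmul_smul_right, hx]
  | word l => rw [← wrd_nil, hmul_wrd_wrd, har_nil_left]

lemma hmul_one_right (x : H M) : hmul x 1 = x := by
  induction x using H.induction_on with
  | zero => exact hmul_zero_left 1
  | add x y hx hy => rw [hmul_add_left, hx, hy]
  | smul c x hx => rw [hmul_smul_left, hx]
  | word l => rw [← wrd_nil, hmul_wrd_wrd, har_nil_right]

lemma hmul_e_zero_mul_left (x y : H M) : hmul (e 0 * x) y = e 0 * hmul x y := by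
  induction x using H.induction_on with
  | zero => rw [mul_zero, hmul_zero_left, mul_zero]
  | add x x' hx hx' => rw [mul_add, hmul_add_left, hmul_add_left, hx, hx', mul_add]
  | smul c x hx => rw [mul_smul_comm, hmul_smul_left, hmul_smul_left, hx, mul_smul_comm]
  | word u =>
    induction y using H.induction_on with
    | zero => rw [hmul_zero_right, hmul_zero_right, mul_zero]
    | add y y' hy hy' => rw [hmul_add_right, hmul_add_right, hy, hy', mul_add]
    | smul c y hy => rw [hmul_smul_right, hmul_smul_right, hy, mul_smul_comm]
    | word v => rw [← wrd_cons, hmul_wrd_wrd, hmul_wrd_wrd, har_zero_cons_left]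

lemma hmul_e_zero_mul_right (x y : H M) : hmul x (e 0 * y) = e 0 * hmul x y := by
  induction y using H.induction_on with
  | zero => rw [mul_zero, hmul_zero_right, mul_zero]
  | add y y' hy hy' => rw [mul_add, hmul_add_right, hmul_add_right, hy, hy', mul_add]
  | smul c y hy => rw [mul_smul_comm, hmul_smul_right, hmul_smul_right, hy, mul_smul_comm]
  | word v =>
    induction x using H.induction_on with
    | zero => rw [hmul_zero_left, hmul_zero_left, mul_zero]
    | add x x' hx hx' => rw [hmul_add_left, hmul_add_left, hx, hx', mul_add]
    | smul c x hx => rw [hmul_smul_left, hmul_smul_left, hx, mul_smul_comm]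
    | word u => rw [← wrd_cons, hmul_wrd_wrd, hmul_wrd_wrd, har_zero_cons_right]

lemma hmul_e_zero_pow (n : ℕ) (x : H M) : hmul (e 0 ^ n) x = e 0 ^ n * x := by
  induction n with
  | zero => rw [pow_zero, hmul_one_left, one_mul]
  | succ n ih => rw [pow_succ', hmul_e_zero_mul_left, ih, mul_assoc]

lemma hmul_e_zero_pow_mul_right (n : ℕ) (x y : H M) :
    hmul x (e 0 ^ n * y) = e 0 ^ n * hmul x y := by
  induction n with
  | zero => rw [pow_zero, one_mul, one_mul]
  | succ n ih => rw [pow_succ', mul_assoc, hmul_e_zero_mul_right, ih, mul_assoc]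

lemma hmul_e_mul_e_mul (a b : M) (x y : H M) :
    hmul (e a * x) (e b * y) =
      e (a * b) * (hmul x (e b * y) + hmul (e a * x) y - e 0 * hmul x y) := by
  induction x using H.induction_on with
  | zero => simp only [mul_zero, hmul_zero_left, add_zero, sub_self]
  | add x x' hx hx' =>
    simp only [mul_add, hmul_add_left, hx, hx']
    noncomm_ring
  | smul c x hx =>
    simp only [mul_smul_comm, hmul_smul_left, hx, ← smul_add, ← smul_sub]
  | word u =>
    induction y using H.induction_on with
    | zero => simp only [mul_zero, hmul_zero_right, add_zero, sub_self]
    | add y y' hy hy' =>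
      simp only [mul_add, hmul_add_right, hy, hy']
      noncomm_ring
    | smul c y hy =>
      simp only [mul_smul_comm, hmul_smul_right, hy, ← smul_add, ← smul_sub]
    | word v => simp only [← wrd_cons, hmul_wrd_wrd, har_cons_cons]

lemma hmul_wrd_assoc : ∀ u v w : List M,
    hmul (hmul (wrd u) (wrd v)) (wrd w) = hmul (wrd u) (hmul (wrd v) (wrd w))
  | [], v, w => by rw [wrd_nil, hmul_one_left, hmul_one_left]
  | a :: u, [], w => by rw [wrd_nil, hmul_one_right, hmul_one_left]
  | a :: u, b :: v, [] => by rw [wrd_nil, hmul_one_right, hmul_one_right]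
  | a :: u, b :: v, c :: w => by
    have h₁ := hmul_wrd_assoc u (b :: v) (c :: w)
    have h₂ := hmul_wrd_assoc (a :: u) v (c :: w)
    have h₃ := hmul_wrd_assoc u v (c :: w)
    have h₄ := hmul_wrd_assoc (a :: u) (b :: v) w
    have h₅ := hmul_wrd_assoc u (b :: v) w
    have h₆ := hmul_wrd_assoc (a :: u) v w
    have h₇ := hmul_wrd_assoc u v w
    simp only [wrd_cons] at *
    rw [hmul_e_mul_e_mul a b, hmul_e_mul_e_mul (a * b) c, ← hmul_e_mul_e_mul a b,
      hmul_e_mul_e_mul b c, hmul_e_mul_e_mul a (b * c), ← hmul_e_mul_e_mul b c]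
    simp only [hmul_sub_left, hmul_add_left, hmul_sub_right, hmul_add_right,
      hmul_e_zero_mul_left, hmul_e_zero_mul_right, h₁, h₂, h₃, h₄, h₅, h₆, h₇,
      mul_assoc a b c]
    noncomm_ring
termination_by u v w => u.length + v.length + w.length

lemma hmul_assoc (x y z : H M) : hmul (hmul x y) z = hmul x (hmul y z) := by
  induction x using H.induction_on with
  | zero => simp only [hmul_zero_left]
  | add x x' hx hx' => simp only [hmul_add_left, hx, hx']
  | smul c x hx => simp only [hmul_smul_left, hx]
  | word u =>
    induction y using H.induction_on with
    | zero => simp only [hmul_zero_left, hmul_zero_right]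
    | add y y' hy hy' => simp only [hmul_add_left, hmul_add_right, hy, hy']
    | smul c y hy => simp only [hmul_smul_left, hmul_smul_right, hy]
    | word v =>
      induction z using H.induction_on with
      | zero => simp only [hmul_zero_right]
      | add z z' hz hz' => simp only [hmul_add_right, hz, hz']
      | smul c z hz => simp only [hmul_smul_right, hz]
      | word w => exact hmul_wrd_assoc u v w

/-- The Euler operator `θ = x d/dx`. -/
def eulerPS {V : Type*} [AddCommMonoid V] [Module ℚ V] (f : ℕ → V) : ℕ → V :=
  fun n => (n : ℚ) • f n

/-- The substitution `f(x) ↦ f(x^k)`. -/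
def dilatePS {α : Type*} [Zero α] (k : ℕ) (f : ℕ → α) : ℕ → α :=
  fun d => if k ∣ d then f (d / k) else 0

lemma eulerPS_apply_zero {V : Type*} [AddCommMonoid V] [Module ℚ V] (f : ℕ → V) :
    eulerPS f 0 = 0 := by
  rw [eulerPS, Nat.cast_zero, zero_smul]

lemma hmulPS_smul_left (c : ℚ) (f g : ℕ → H M) : hmulPS (c • f) g = c • hmulPS f g := by
  funext n
  simp only [hmulPS, Pi.smul_apply, hmul_smul_left, Finset.smul_sum]

lemma hmulPS_smul_right (c : ℚ) (f g : ℕ → H M) : hmulPS f (c • g) = c • hmulPS f g := by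
  funext n
  simp only [hmulPS, Pi.smul_apply, hmul_smul_right, Finset.smul_sum]

lemma eulerPS_hmulPS (f g : ℕ → H M) :
    eulerPS (hmulPS f g) = hmulPS (eulerPS f) g + hmulPS f (eulerPS g) := by
  funext n
  simp only [eulerPS, hmulPS, Pi.add_apply, Finset.smul_sum, ← Finset.sum_add_distrib,
    hmul_smul_left, hmul_smul_right, ← add_smul]
  refine Finset.sum_congr rfl fun i hi => ?_
  rw [Nat.cast_sub (Finset.mem_range_succ_iff.mp hi), add_sub_cancel]

lemma hmulPS_left_comm (f g h : ℕ → H M)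
    (hfg : ∀ i j, hmul (f i) (g j) = hmul (g j) (f i)) :
    hmulPS f (hmulPS g h) = hmulPS g (hmulPS f h) := by
  have expand : ∀ f g : ℕ → H M, ∀ n, hmulPS f (hmulPS g h) n =
      ∑ i ∈ range (n + 1), ∑ j ∈ range (n - i + 1),
        hmul (hmul (f i) (g j)) (h (n - i - j)) :=
    fun f g n => Finset.sum_congr rfl fun i _ => by
      simp only [hmulPS, hmul_sum_right, hmul_assoc]
  funext n
  rw [expand, expand]
  calc _ = ∑ i ∈ range (n + 1), ∑ j ∈ range (n - i + 1),
        hmul (hmul (g j) (f i)) (h (n - j - i)) :=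
        Finset.sum_congr rfl fun i _ => Finset.sum_congr rfl fun j _ => by
          rw [hfg, Nat.sub_right_comm]
    _ = _ := Finset.sum_comm' fun i j => by simp only [Finset.mem_range]; omega

lemma psPow_eq_zero_of_lt {g : ℕ → H M} (hg : g 0 = 0) :
    ∀ {m n : ℕ}, n < m → psPow g m n = 0
  | m + 1, n, h => by
    change hmulPS g (psPow g m) n = 0
    refine Finset.sum_eq_zero fun i hi => ?_
    rcases Nat.eq_zero_or_pos i with rfl | hi₀
    · rw [hg, hmul_zero_left]
    · rw [psPow_eq_zero_of_lt hg (by grind), hmul_zero_right]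

lemma hmulPS_psPow_zero (f g : ℕ → H M) : hmulPS f (psPow g 0) = f := by
  funext n
  rw [hmulPS, Finset.sum_eq_single_of_mem n (Finset.self_mem_range_succ n)]
  · simp [psPow, hmul_one_right]
  · intro i hi hin
    simp only [psPow, if_neg (show n - i ≠ 0 by grind), hmul_zero_right]

lemma eulerPS_psPow_succ {g : ℕ → H M} (hg : ∀ i j, hmul (g i) (g j) = hmul (g j) (g i)) :
    ∀ m : ℕ, eulerPS (psPow g (m + 1)) = ((m : ℚ) + 1) • hmulPS (eulerPS g) (psPow g m)
  | 0 => by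
    change eulerPS (hmulPS g (psPow g 0)) = ((0 : ℕ) + 1 : ℚ) • hmulPS (eulerPS g) (psPow g 0)
    rw [hmulPS_psPow_zero, hmulPS_psPow_zero, Nat.cast_zero, zero_add, one_smul]
  | m + 1 => by
    have hcomm : ∀ i j, hmul (eulerPS g i) (g j) = hmul (g j) (eulerPS g i) := fun i j => by
      rw [eulerPS, hmul_smul_left, hmul_smul_right, hg]
    calc eulerPS (hmulPS g (psPow g (m + 1)))
        = hmulPS (eulerPS g) (psPow g (m + 1)) + hmulPS g (eulerPS (psPow g (m + 1))) :=
          eulerPS_hmulPS _ _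
      _ = hmulPS (eulerPS g) (psPow g (m + 1)) +
          ((m : ℚ) + 1) • hmulPS (eulerPS g) (psPow g (m + 1)) := by
          rw [eulerPS_psPow_succ hg m, hmulPS_smul_right, ← hmulPS_left_comm _ _ _ hcomm]; rfl
      _ = _ := by push_cast; module

lemma expPS_zero (g : ℕ → H M) : expPS g 0 = 1 := by
  simp [expPS, psPow]

lemma expPS_eq_sum_range {g : ℕ → H M} (hg : g 0 = 0) {n N : ℕ} (hN : n < N) :
    expPS g n = ∑ m ∈ range N, (Nat.factorial m : ℚ)⁻¹ • psPow g m n := by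
  refine Finset.sum_subset (Finset.range_subset_range.mpr hN) fun m _ hm => ?_
  rw [psPow_eq_zero_of_lt hg (by simpa using hm), smul_zero]

lemma eulerPS_expPS {g : ℕ → H M} (hg₀ : g 0 = 0)
    (hg : ∀ i j, hmul (g i) (g j) = hmul (g j) (g i)) :
    eulerPS (expPS g) = hmulPS (eulerPS g) (expPS g) := by
  funext n
  calc eulerPS (expPS g) n
      = ∑ m ∈ range (n + 2), (Nat.factorial m : ℚ)⁻¹ • eulerPS (psPow g m) n := by
        simp only [eulerPS, expPS_eq_sum_range hg₀ (Nat.lt_add_of_pos_right two_pos),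
          Finset.smul_sum, smul_comm (n : ℚ)]
    _ = ∑ m ∈ range (n + 1),
          (Nat.factorial m : ℚ)⁻¹ • hmulPS (eulerPS g) (psPow g m) n := by
        have h₀ : (Nat.factorial 0 : ℚ)⁻¹ • eulerPS (psPow g 0) n = 0 := by
          by_cases hn : n = 0 <;> simp [eulerPS, psPow, hn]
        rw [Finset.sum_range_succ', h₀, add_zero]
        refine Finset.sum_congr rfl fun m _ => ?_
        rw [eulerPS_psPow_succ hg, Pi.smul_apply, smul_smul, Nat.factorial_succ]
        congr 1
        push_cast
        field_simp
    _ = ∑ i ∈ range (n + 1),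
          hmul (eulerPS g i)
            (∑ m ∈ range (n + 1), (Nat.factorial m : ℚ)⁻¹ • psPow g m (n - i)) := by
        simp only [hmulPS, Finset.smul_sum, hmul_sum_right, hmul_smul_right]
        exact Finset.sum_comm
    _ = hmulPS (eulerPS g) (expPS g) n :=
        Finset.sum_congr rfl fun i _ => by rw [expPS_eq_sum_range hg₀ (N := n + 1) (by omega)]

lemma eq_of_eulerPS_eq_hmulPS {f a b : ℕ → H M} (hf : f 0 = 0) (h₀ : a 0 = b 0)
    (ha : eulerPS a = hmulPS f a) (hb : eulerPS b = hmulPS f b) : a = b := by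
  funext n
  induction n using Nat.strong_induction_on with
  | _ n ih =>
    rcases Nat.eq_zero_or_pos n with rfl | hn
    · exact h₀
    · refine smul_right_injective (H M) (Nat.cast_ne_zero.mpr hn.ne' : (n : ℚ) ≠ 0) ?_
      change eulerPS a n = eulerPS b n
      rw [ha, hb]
      refine Finset.sum_congr rfl fun i hi => ?_
      rcases Nat.eq_zero_or_pos i with rfl | hi₀
      · rw [hf, hmul_zero_left, hmul_zero_left]
      · rw [ih (n - i) (by omega)]

lemma eulerPS_dilatePS {V : Type*} [AddCommMonoid V] [Module ℚ V] (k : ℕ) (f : ℕ → V) :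
    eulerPS (dilatePS k f) = (k : ℚ) • dilatePS k (eulerPS f) := by
  funext d
  simp only [eulerPS, dilatePS, Pi.smul_apply]
  split_ifs with h
  · obtain ⟨q, rfl⟩ := h
    rcases Nat.eq_zero_or_pos k with rfl | hk
    · simp
    · rw [Nat.mul_div_cancel_left q hk, smul_smul, Nat.cast_mul]
  · rw [smul_zero, smul_zero]

lemma sum_range_mul_add_one_of_dvd {α : Type*} [AddCommMonoid α] {k : ℕ} (hk : 0 < k)
    (N : ℕ) {F : ℕ → α} (hF : ∀ i, ¬ k ∣ i → F i = 0) :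
    ∑ i ∈ range (k * N + 1), F i = ∑ m ∈ range (N + 1), F (k * m) := by
  rw [← Finset.sum_image (f := F) fun _ _ _ _ h => Nat.eq_of_mul_eq_mul_left hk h]
  symm
  refine Finset.sum_subset (fun i hi => ?_) fun i hi hi' => hF i ?_
  · obtain ⟨m, hm, rfl⟩ := Finset.mem_image.mp hi
    simp only [Finset.mem_range, Nat.lt_succ_iff] at hm ⊢
    exact Nat.mul_le_mul_left k hm
  · rintro ⟨m, rfl⟩
    simp only [Finset.mem_range, Nat.lt_succ_iff] at hi
    exact hi' (Finset.mem_image_of_mem _ (Finset.mem_range_succ_iff.mpr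
      (Nat.le_of_mul_le_mul_left hi hk)))

lemma hmulPS_dilatePS {k : ℕ} (hk : 0 < k) (f g : ℕ → H M) :
    hmulPS (dilatePS k f) (dilatePS k g) = dilatePS k (hmulPS f g) := by
  funext d
  by_cases hd : k ∣ d
  · obtain ⟨N, rfl⟩ := hd
    rw [dilatePS, if_pos (dvd_mul_right k N), Nat.mul_div_cancel_left N hk, hmulPS, hmulPS,
      sum_range_mul_add_one_of_dvd hk N fun i hi => by rw [dilatePS, if_neg hi, hmul_zero_left]]
    refine Finset.sum_congr rfl fun m _ => ?_
    rw [← Nat.mul_sub, dilatePS, dilatePS, if_pos (dvd_mul_right k m),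
      if_pos (dvd_mul_right k _), Nat.mul_div_cancel_left _ hk, Nat.mul_div_cancel_left _ hk]
  · rw [dilatePS, if_neg hd]
    refine Finset.sum_eq_zero fun i hi => ?_
    simp only [dilatePS]
    split_ifs with hi₁ hi₂
    · have hle : i ≤ d := Finset.mem_range_succ_iff.mp hi
      exact absurd (by simpa [Nat.sub_add_cancel hle] using Nat.dvd_add hi₂ hi₁) hd
    all_goals simp only [hmul_zero_left, hmul_zero_right]

lemma hmul_s_s_mul {p q : ℕ} (hp : 1 ≤ p) (hq : 1 ≤ q) (x b : M) (y : H M) :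
    hmul (s x p) (s b q * y) =
      s (x * b) p * s b q * y - s (x * b) (p + q) * y + s (x * b) q * hmul (s x p) y := by
  have hpq : p + q - 1 = 1 + (p - 1) + (q - 1) := by omega
  simp only [s, mul_assoc, hmul_e_mul_e_mul, hmul_e_zero_pow, hmul_e_zero_pow_mul_right, hpq,
    pow_add, pow_one]
  rw [(Commute.pow_pow_self (e (0 : M)) (q - 1) (p - 1)).left_comm y, mul_sub, mul_add]
  abel

lemma hmul_s_comm {x y : M} (h : Commute x y) (p q : ℕ) :
    hmul (s x p) (s y q) = hmul (s y q) (s x p) := by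
  rw [s_eq_wrd, s_eq_wrd, hmul_wrd_wrd, hmul_wrd_wrd, har_comm]
  simp only [List.mem_cons, List.mem_replicate]
  rintro a (rfl | ⟨-, rfl⟩) b (rfl | ⟨-, rfl⟩)
  exacts [h, Commute.zero_right a, Commute.zero_left b, Commute.refl 0]

lemma nsmul_sprod_eq_sum {k : ℕ} (hk : 1 ≤ k) (z : M) (n : ℕ) :
    (n : ℚ) • sprod z k n =
      ∑ m ∈ range n, hmul (s (z ^ (m + 1)) ((m + 1) * k)) (sprod z k (n - 1 - m)) := by
  induction n with
  | zero => simp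
  | succ n ih =>
    set C : ℕ → H M := fun m => s (z ^ (n + 1)) ((m + 1) * k) * sprod z k (n - m)
    have hstep : ∀ m ∈ range n, hmul (s (z ^ (m + 1)) ((m + 1) * k)) (sprod z k (n - m)) =
        (C m - C (m + 1)) +
          s (z ^ (n + 1)) k * hmul (s (z ^ (m + 1)) ((m + 1) * k)) (sprod z k (n - 1 - m)) := by
      intro m hm
      obtain ⟨j, hj⟩ : ∃ j, n - m = j + 1 :=
        ⟨n - 1 - m, by simp only [mem_range] at hm; omega⟩
      have hz : z ^ (m + 1) * z ^ (j + 1) = z ^ (n + 1) := by rw [← pow_add]; congr 1; omega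
      have hlen : (m + 1) * k + k = (m + 1 + 1) * k := by ring
      rw [hj, sprod, hmul_s_s_mul (Nat.mul_pos m.succ_pos hk) hk, hz, hlen]
      simp only [C, hj, show n - (m + 1) = j by omega, show n - 1 - m = j by omega, mul_assoc]
      rfl
    have hC₀ : C 0 = sprod z k (n + 1) := by simp [C, sprod]
    have hCn : C n = hmul (s (z ^ (n + 1)) ((n + 1) * k)) (sprod z k (n + 1 - 1 - n)) := by
      simp [C, sprod, hmul_one_right]
    rw [Finset.sum_range_succ, ← hCn]
    simp only [Nat.add_sub_cancel]
    rw [Finset.sum_congr rfl hstep, Finset.sum_add_distrib, Finset.sum_range_sub',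
      ← Finset.mul_sum, ← ih, hC₀, mul_smul_comm, ← sprod]
    push_cast
    module

-- At `n = 0` this is `0`, because `(0 : ℚ)⁻¹ = 0`.
noncomputable def logSineCoef (z : M) (k n : ℕ) : H M :=
  (n : ℚ)⁻¹ • s (z ^ n) (n * k)

lemma eulerPS_logSineCoef_succ (z : M) (k m : ℕ) :
    eulerPS (logSineCoef z k) (m + 1) = s (z ^ (m + 1)) ((m + 1) * k) := by
  rw [eulerPS, logSineCoef, smul_smul, mul_inv_cancel₀ (Nat.cast_ne_zero.mpr m.succ_ne_zero),
    one_smul]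

lemma eulerPS_sprod {k : ℕ} (hk : 1 ≤ k) (z : M) :
    eulerPS (sprod z k) = hmulPS (eulerPS (logSineCoef z k)) (sprod z k) := by
  funext n
  rw [eulerPS, nsmul_sprod_eq_sum hk, hmulPS, Finset.sum_range_succ', eulerPS_apply_zero,
    hmul_zero_left, add_zero]
  refine Finset.sum_congr rfl fun m _ => ?_
  rw [eulerPS_logSineCoef_succ, Nat.sub_right_comm, Nat.sub_sub]

lemma gexp_eq_dilatePS (z : M) (k : ℕ) : gexp z k = dilatePS k (logSineCoef z k) := by
  funext d
  rw [gexp, dilatePS, logSineCoef]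
  by_cases hd : k ∣ d
  · rcases eq_or_ne d 0 with rfl | hd₀
    · simp
    · rw [if_pos ⟨hd₀, hd⟩, if_pos hd, Nat.div_mul_cancel hd]
  · rw [if_neg fun h => hd h.2, if_neg hd]

lemma gexp_hmul_comm (z : M) (k i j : ℕ) :
    hmul (gexp z k i) (gexp z k j) = hmul (gexp z k j) (gexp z k i) := by
  simp only [gexp_eq_dilatePS, dilatePS, logSineCoef]
  split_ifs <;> simp only [hmul_smul_left, hmul_smul_right, hmul_zero_left, hmul_zero_right,
    smul_zero, hmul_s_comm ((Commute.refl z).pow_pow _ _), smul_comm ((j / k : ℕ) : ℚ)⁻¹]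

lemma dilatePS_sprod_eq_expPS {k : ℕ} (hk : 1 ≤ k) (z : M) :
    dilatePS k (sprod z k) = expPS (gexp z k) := by
  refine eq_of_eulerPS_eq_hmulPS (eulerPS_apply_zero _) ?_ ?_
    (eulerPS_expPS (by simp [gexp]) (gexp_hmul_comm z k))
  · rw [expPS_zero, dilatePS, if_pos (dvd_zero k), Nat.zero_div]
    rfl
  · rw [eulerPS_dilatePS, eulerPS_sprod hk, ← hmulPS_dilatePS hk, ← hmulPS_smul_left,
      ← eulerPS_dilatePS, ← gexp_eq_dilatePS]

lemma STcoef_eq {k : ℕ} (hk : 1 ≤ k) (z : M) (d : ℕ) :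
    STcoef z k d = if k - 1 ≤ d then dilatePS k (sprod z k) (d - (k - 1)) else 0 := by
  by_cases h : k - 1 ≤ d
  · obtain ⟨j, rfl⟩ := Nat.exists_eq_add_of_le h
    rw [if_pos h, STcoef, show k - 1 + j + 1 = j + k by omega, Nat.add_sub_cancel_left, dilatePS,
      Nat.add_div_right j hk, Nat.add_sub_cancel]
    simp only [Nat.dvd_add_self_right]
  · rw [if_neg h, STcoef, if_neg (Nat.not_dvd_of_pos_of_lt d.succ_pos (by omega))]

/-- Theorem 2.5: `S^T_{z,k}(x) = S^R_{z,k}(x)` in `𝔥_{M,∗}⟦x⟧`; equivalently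
`Σ_{n≥0} s_{z^n,k}⋯s_{z,k} x^{nk} = exp_∗(Σ_{n≥1} (s_{z^n,nk}/n) x^{nk})`. -/
theorem ST_eq_SR (M : Type*) [MonoidWithZero M] (z : M) (k : ℕ) (hk : 1 ≤ k) :
    (∀ d, STcoef z k d = SRcoef z k d) ∧
    (∀ d, (if k ∣ d then sprod z k (d / k) else 0) = expPS (gexp z k) d) := by
  have h := dilatePS_sprod_eq_expPS hk z
  exact ⟨fun d => by rw [STcoef_eq hk, SRcoef, h], congrFun h⟩
end

section
/- Let z ∈ M. In the power series ring 𝔥_{M,∗}⟦x,y⟧, for every N ≥ 0 and 0 ≤ i ≤ 2N+1, the coefficient of x^i y^{2N+1−i} in A_z(x,y) := S_z(x+y) − S_z(x) ∗ C_z(y) − C_z(x) ∗ S_z(y) equals g_{z,⌊i/2⌋, N−⌊i/2⌋} / (i!(2N+1−i)!) when using the convention that for odd i one takes g_{z,(i−1)/2, N−(i−1)/2} and for even i one takes g_{z,i/2, N−i/2}; moreover all coefficients of A_z in total even degree vanish. -/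
open scoped BigOperators

variable {M : Type*} [MonoidWithZero M]

/-! The formal sine `S_z` has only odd-degree coefficients and the formal cosine `C_z` only
even-degree ones. Hence in total even degree every term of `A_z` vanishes, and at `x^i y^j`
with `i + j` odd exactly one of the two products survives; multiplying by `i! j!` turns the
binomial coefficient into `(i+j)!` and the factor `i+1` (or `j+1`) of `C_z` into the missing
factorial, which is `g_{z,⌊i/2⌋,⌊j/2⌋}`. -/

open scoped Nat

section HarmonicProduct

theorem hmul_zero (f : H M) : hmul f 0 = 0 := by simp [hmul]

theorem zero_hmul (g : H M) : hmul 0 g = 0 := by simp [hmul]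

theorem smul_hmul (c : ℚ) (f g : H M) : hmul (c • f) g = c • hmul f g := by
  unfold hmul
  rw [MonoidAlgebra.coeff_smul, Finsupp.sum_smul_index fun _ => by simp, Finsupp.smul_sum]
  refine Finsupp.sum_congr fun w _ => ?_
  rw [Finsupp.smul_sum]
  refine Finsupp.sum_congr fun w' _ => ?_
  rw [mul_assoc, mul_smul]

theorem hmul_smul (c : ℚ) (f g : H M) : hmul f (c • g) = c • hmul f g := by
  unfold hmul
  rw [Finsupp.smul_sum]
  refine Finsupp.sum_congr fun w _ => ?_
  rw [MonoidAlgebra.coeff_smul, Finsupp.sum_smul_index fun _ => by simp, Finsupp.smul_sum]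
  refine Finsupp.sum_congr fun w' _ => ?_
  rw [mul_left_comm, mul_smul]

end HarmonicProduct

section SineCosine

variable (z : M) (n : ℕ)

theorem Scoef_two_mul_add_one : Scoef z (2 * n + 1) = sprod z 2 n := by
  simp [Scoef, Nat.mul_add_div]

theorem Scoef_two_mul : Scoef z (2 * n) = 0 := by
  simp [Scoef]

theorem Ccoef_two_mul : Ccoef z (2 * n) = ((2 * n + 1 : ℕ) : ℚ) • sprod z 2 n := by
  simp [Ccoef, Scoef_two_mul_add_one]

theorem Ccoef_two_mul_add_one : Ccoef z (2 * n + 1) = 0 := by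
  rw [Ccoef, show 2 * n + 1 + 1 = 2 * (n + 1) by ring, Scoef_two_mul, smul_zero]

end SineCosine

theorem gz_eq (z : M) (m n : ℕ) :
    gz z m n = ((2 * (m + n) + 1)! : ℚ) • sprod z 2 (m + n)
      - ((2 * m + 1)! * (2 * n + 1)! : ℚ) • hmul (sprod z 2 m) (sprod z 2 n) := by
  rw [gz, wz, wz, wz, smul_hmul, hmul_smul, smul_smul]

theorem factorial_mul_factorial_mul_choose_add (i j : ℕ) :
    (i ! * j ! * (i + j).choose i : ℚ) = (i + j)! := by
  rw [mul_comm, ← mul_assoc]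
  exact_mod_cast Nat.choose_symm_add ▸ Nat.add_choose_mul_factorial_mul_factorial i j

theorem factorial_mul_factorial_smul_Acoef (z : M) {i j : ℕ} (hij : (i + j) % 2 = 1) :
    ((i ! * j ! : ℚ)) • Acoef z i j = gz z (i / 2) (j / 2) := by
  rcases Nat.even_or_odd' i with ⟨m, rfl | rfl⟩ <;>
    obtain ⟨n, rfl | rfl⟩ := Nat.even_or_odd' j <;> try omega
  · have hdeg : 2 * m + (2 * n + 1) = 2 * (m + n) + 1 := by ring
    have hchoose := factorial_mul_factorial_mul_choose_add (2 * m) (2 * n + 1)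
    have hfac : ((2 * m)! * (2 * n + 1)! * (2 * m + 1 : ℕ) : ℚ) = (2 * m + 1)! * (2 * n + 1)! := by
      push_cast [Nat.factorial_succ (2 * m)]; ring
    rw [hdeg] at hchoose
    rw [Acoef, hdeg, Scoef_two_mul_add_one, Scoef_two_mul, Ccoef_two_mul, Scoef_two_mul_add_one,
      zero_hmul, smul_hmul, sub_zero, smul_sub, smul_smul, smul_smul, hchoose, hfac,
      show 2 * m / 2 = m by omega, show (2 * n + 1) / 2 = n by omega, gz_eq]
  · have hdeg : 2 * m + 1 + 2 * n = 2 * (m + n) + 1 := by ring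
    have hchoose := factorial_mul_factorial_mul_choose_add (2 * m + 1) (2 * n)
    have hfac :
        ((2 * m + 1)! * (2 * n)! * (2 * n + 1 : ℕ) : ℚ) = (2 * m + 1)! * (2 * n + 1)! := by
      push_cast [Nat.factorial_succ (2 * n)]; ring
    rw [hdeg] at hchoose
    rw [Acoef, hdeg, Scoef_two_mul_add_one, Scoef_two_mul_add_one, Scoef_two_mul,
      Ccoef_two_mul_add_one, Ccoef_two_mul, hmul_zero, hmul_smul, sub_zero, smul_sub, smul_smul,
      smul_smul, hchoose, hfac, show (2 * m + 1) / 2 = m by omega, show 2 * n / 2 = n by omega, gz_eq]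

theorem Acoef_eq_zero_of_even (z : M) {i j : ℕ} (hij : (i + j) % 2 = 0) : Acoef z i j = 0 := by
  rcases Nat.even_or_odd' i with ⟨m, rfl | rfl⟩ <;>
    obtain ⟨n, rfl | rfl⟩ := Nat.even_or_odd' j <;> try omega
  · rw [Acoef, ← mul_add, Scoef_two_mul, Scoef_two_mul, Scoef_two_mul, zero_hmul, hmul_zero]
    simp
  · rw [Acoef, show 2 * m + 1 + (2 * n + 1) = 2 * (m + n + 1) by ring, Scoef_two_mul,
      Ccoef_two_mul_add_one, Ccoef_two_mul_add_one, zero_hmul, hmul_zero]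
    simp

/-- The coefficients of `A_z(x,y) = S_z(x+y) − S_z(x) ∗ C_z(y) − C_z(x) ∗ S_z(y)`:
at `x^i y^{2N+1−i}` it equals `g_{z,⌊i/2⌋,N−⌊i/2⌋}/(i!(2N+1−i)!)`, and all total-even
degree coefficients vanish. -/
theorem Acoef_formula (M : Type*) [MonoidWithZero M] (z : M) :
    (∀ N i : ℕ, i ≤ 2 * N + 1 →
      Acoef z i (2 * N + 1 - i) =
        ((Nat.factorial i * Nat.factorial (2 * N + 1 - i) : ℚ))⁻¹ •
          gz z (i / 2) (N - i / 2)) ∧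
    (∀ i j : ℕ, (i + j) % 2 = 0 → Acoef z i j = 0) := by
  refine ⟨fun N i hi => ?_, fun i j => Acoef_eq_zero_of_even z⟩
  rw [show N - i / 2 = (2 * N + 1 - i) / 2 by omega,
    ← factorial_mul_factorial_smul_Acoef z (by omega), inv_smul_smul₀ (by positivity)]
end
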